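/- Let f be a non-zero vector of a metric vector space (V,Q) such that f ∉ V^⊥ and Q(f) = 0. Then ΔO(V,Q,f) = ΔO'(V,Q,f) = {id_V}. -/

import Mathlib

/-! Setting: a field `F`, a finite-dimensional `F`-vector space `V`, a quadratic form
`Q : V → F` with polar form `B = QuadraticMap.polar Q` (the bilinear map `Q.polarBilin`),
induced map `D = Q.polarBilin : V →ₗ[F] Module.Dual F V`, and radical
`V^⊥ = LinearMap.ker Q.polarBilin`. -/

variable {F V : Type*} [Field F] [AddCommGroup V] [Module F V] [FiniteDimensional F V]

/-- The map `δ_{c*,f} : x ↦ x + ⟨c*,x⟩ • f`. -/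
def deltaMap (c : Module.Dual F V) (f : V) : V →ₗ[F] V :=
  LinearMap.id + c.smulRight f

/-- The orthogonal group `O(V,Q)`, as a set of linear endomorphisms. -/
def orthSet (Q : QuadraticForm F V) : Set (V →ₗ[F] V) :=
  {φ | Function.Bijective φ ∧ ∀ x, Q (φ x) = Q x}

/-- The weak orthogonal group `O'(V,Q)`: isometries fixing the radical elementwise. -/
def wOrthSet (Q : QuadraticForm F V) : Set (V →ₗ[F] V) :=
  {φ | Function.Bijective φ ∧ (∀ x, Q (φ x) = Q x) ∧
    ∀ x ∈ LinearMap.ker Q.polarBilin, φ x = x}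

/-- The group `Δ(V,f) = {δ_{a*,f} : a* ∈ V*, ⟨a*,f⟩ ≠ -1}`. -/
def deltaSet (f : V) : Set (V →ₗ[F] V) :=
  {φ | ∃ a : Module.Dual F V, a f ≠ -1 ∧ φ = deltaMap a f}

/-- The `Q`-reflection `ξ_r : x ↦ x - Q(r)⁻¹ • B(r,x) • r` in the direction of `r`. -/
noncomputable def xiMap (Q : QuadraticForm F V) (r : V) : V →ₗ[F] V :=
  LinearMap.id - (Q r)⁻¹ • (Q.polarBilin r).smulRight r

/-! Since `Q f = 0`, we have `Q (x + a x • f) = Q x + a x * B(x, f)`, so `δ_{a,f}` is an isometry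
only if the product of the linear forms `a` and `B(·, f)` vanishes identically. Over a field a
product of two nonzero linear forms never does, and `B(·, f) ≠ 0` because `f ∉ V^⊥`; hence
`a = 0`. -/

theorem QuadraticMap.map_add_smul_of_map_eq_zero {R M : Type*} [CommRing R] [AddCommGroup M]
    [Module R M] (Q : QuadraticForm R M) {f : M} (hf : Q f = 0) (x : M) (c : R) :
    Q (x + c • f) = Q x + c * polar Q x f := by
  rw [← smul_eq_mul, ← polar_smul_right, polar, QuadraticMap.map_smul, hf, smul_zero]
  ring

theorem Module.Dual.eq_zero_or_eq_zero_of_forall_mul_eq_zero {R M : Type*} [CommSemiring R]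
    [NoZeroDivisors R] [AddCommMonoid M] [Module R M] {a b : Module.Dual R M}
    (h : ∀ x, a x * b x = 0) : a = 0 ∨ b = 0 := by
  by_contra! hab
  obtain ⟨x, hx⟩ := DFunLike.ne_iff.mp hab.1
  obtain ⟨y, hy⟩ := DFunLike.ne_iff.mp hab.2
  have hbx : b x = 0 := (mul_eq_zero.mp (h x)).resolve_left hx
  have hay : a y = 0 := (mul_eq_zero.mp (h y)).resolve_right hy
  have := h (x + y)
  rw [map_add, map_add, hbx, hay, add_zero, zero_add] at this
  exact mul_ne_zero hx hy this

omit [FiniteDimensional F V] in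
theorem deltaMap_apply (c : Module.Dual F V) (f x : V) : deltaMap c f x = x + c x • f :=
  rfl

omit [FiniteDimensional F V] in
theorem deltaMap_zero (f : V) : deltaMap (0 : Module.Dual F V) f = LinearMap.id := by
  ext x
  simp [deltaMap_apply]

omit [FiniteDimensional F V] in
theorem eq_zero_of_forall_map_deltaMap {Q : QuadraticForm F V} {a : Module.Dual F V} {f : V}
    (hfrad : f ∉ LinearMap.ker Q.polarBilin) (hQf : Q f = 0)
    (hQ : ∀ x, Q (deltaMap a f x) = Q x) : a = 0 := by
  have hmul : ∀ x, a x * Q.polarBilin f x = 0 := fun x => by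
    have := hQ x
    rwa [deltaMap_apply, QuadraticMap.map_add_smul_of_map_eq_zero Q hQf, add_eq_left,
      QuadraticMap.polar_comm] at this
  exact (Module.Dual.eq_zero_or_eq_zero_of_forall_mul_eq_zero hmul).resolve_right hfrad

omit [FiniteDimensional F V] in
theorem deltaSet_inter_eq_singleton_id {Q : QuadraticForm F V} {f : V}
    (hfrad : f ∉ LinearMap.ker Q.polarBilin) (hQf : Q f = 0) {S : Set (V →ₗ[F] V)}
    (hS_id : LinearMap.id ∈ S) (hS : ∀ φ ∈ S, ∀ x, Q (φ x) = Q x) :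
    deltaSet f ∩ S = {LinearMap.id} := by
  refine Set.eq_singleton_iff_unique_mem.mpr ⟨⟨⟨0, by simp, (deltaMap_zero f).symm⟩, hS_id⟩, ?_⟩
  rintro φ ⟨⟨a, -, rfl⟩, hφ⟩
  rw [eq_zero_of_forall_map_deltaMap hfrad hQf (hS _ hφ), deltaMap_zero]

theorem stmt1_general (Q : QuadraticForm F V) (f : V)
    (hfrad : f ∉ LinearMap.ker Q.polarBilin) (hQf : Q f = 0) :
    deltaSet f ∩ orthSet Q = ({LinearMap.id} : Set (V →ₗ[F] V)) ∧
    deltaSet f ∩ wOrthSet Q = ({LinearMap.id} : Set (V →ₗ[F] V)) :=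
  ⟨deltaSet_inter_eq_singleton_id hfrad hQf ⟨Function.bijective_id, fun _ => rfl⟩
      fun _ hφ => hφ.2,
    deltaSet_inter_eq_singleton_id hfrad hQf ⟨Function.bijective_id, fun _ => rfl, fun _ _ => rfl⟩
      fun _ hφ => hφ.2.1⟩

/-- Lemma 3.1(b): if `f ∉ V^⊥` and `Q f = 0`, then `ΔO(V,Q,f) = ΔO'(V,Q,f) = {id}`. -/
theorem stmt1 (Q : QuadraticForm F V) (f : V) (hf : f ≠ 0)
    (hfrad : f ∉ LinearMap.ker Q.polarBilin) (hQf : Q f = 0) :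
    deltaSet f ∩ orthSet Q = ({LinearMap.id} : Set (V →ₗ[F] V)) ∧
    deltaSet f ∩ wOrthSet Q = ({LinearMap.id} : Set (V →ₗ[F] V)) :=
  stmt1_general Q f hfrad hQf
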